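/- Let q = (τ⁺, τ⁻, ℘) be a couple and let m, n be nodes of q. Then the following are equivalent: (i) m ∼ n; (ii) ζ_m = ζ_n for every additive abelian group G and every ζ ∈ D^q(G); (iii) η_m = η_n for every additive abelian group G and every η ∈ C^q(G). -/

import Mathlib

noncomputable section
open scoped Classical

namespace WickNLS

/-! ## Ternary trees, signed ternary trees and couples -/

/-- Ternary trees: every non-leaf (branching) node has three ordered children. -/
inductive TTree : Type
  | leaf : TTree
  | node : TTree → TTree → TTree → TTree
deriving DecidableEq

namespace TTree

/-- The order of a ternary tree: the number of its branching nodes. -/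
def order : TTree → ℕ
  | leaf => 0
  | node a b c => order a + order b + order c + 1

/-- The subtree of `t` at the path `p` from the root (child indices `0,1,2` denote the
left, middle and right child, respectively), if `p` is a valid path. -/
def sub : TTree → List (Fin 3) → Option TTree
  | t, [] => some t
  | leaf, _ :: _ => none
  | node a b c, i :: p => sub (if i = 0 then a else if i = 1 then b else c) p

/-- `p` is (the path of) a node of `t`. -/
def valid (t : TTree) (p : List (Fin 3)) : Prop := (t.sub p).isSome = true

/-- `p` is (the path of) a leaf node of `t`. -/
def isLeaf (t : TTree) (p : List (Fin 3)) : Prop := t.sub p = some leaf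

/-- `p` is (the path of) a branching node of `t`. -/
def isBranch (t : TTree) (p : List (Fin 3)) : Prop := ∃ a b c, t.sub p = some (node a b c)

/-- Replace the subtree at the path `p` by `r`. -/
def replace : TTree → List (Fin 3) → TTree → TTree
  | _, [], r => r
  | leaf, _ :: _, _ => leaf
  | node a b c, i :: p, r =>
      if i = 0 then node (replace a p r) b c
      else if i = 1 then node a (replace b p r) c
      else node a b (replace c p r)

end TTree

/-- The sign `ι` of the node at path `p` of a signed ternary tree whose root carries the
sign `σ`: because `ι_{b[j]} = ι_b · (-1)^(j+1)`, the sign is kept by the two outer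
children and flipped by the middle child. -/
def nodeSign (σ : ℤ) (p : List (Fin 3)) : ℤ := σ * (-1) ^ (p.count (1 : Fin 3))

/-- Nodes of a couple: `(true, p)` is the node at path `p` of the positive tree `τ⁺`,
and `(false, p)` is the node at path `p` of the negative tree `τ⁻`. -/
abbrev CNode : Type := Bool × List (Fin 3)

/-- The (raw data of a) couple `(τ⁺, τ⁻, ℘)`: a positive tree `tp`, a negative tree `tm`,
the pairing `pr` sending each leaf of `tp` to its partner leaf of `tm`, and the inverse
pairing `pl`. -/
structure Couple : Type where
  tp : TTree
  tm : TTree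
  pr : List (Fin 3) → List (Fin 3)
  pl : List (Fin 3) → List (Fin 3)

namespace Couple

/-- The tree of the given side of the couple (`true` ↦ positive tree). -/
def tree (q : Couple) (b : Bool) : TTree := if b then q.tp else q.tm

/-- The sign of a node of a couple (the root of `τ⁺` has sign `+1`, that of `τ⁻` has
sign `-1`). -/
def sign (x : CNode) : ℤ := nodeSign (if x.1 then 1 else -1) x.2

/-- `x` is a node of the couple `q`. -/
def isNode (q : Couple) (x : CNode) : Prop := (q.tree x.1).valid x.2

/-- `x` is a leaf of the couple `q`. -/
def isLeafN (q : Couple) (x : CNode) : Prop := (q.tree x.1).isLeaf x.2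

/-- `x` is a branching node of the couple `q`. -/
def isBranchN (q : Couple) (x : CNode) : Prop := (q.tree x.1).isBranch x.2

/-- Well-formedness of a couple: the two trees have the same order; `pr` is a bijection
(with inverse `pl`) from the leaves of the positive tree onto the leaves of the negative
tree, pairing leaves of opposite signs.  The fields `pr_norm` and `pl_norm` normalize the
(irrelevant) values of `pr` and `pl` off their domains, so that equality of raw couples
is equality of couples. -/
structure IsCouple (q : Couple) : Prop where
  order_eq : q.tp.order = q.tm.order
  pr_leaf : ∀ l, q.tp.isLeaf l → q.tm.isLeaf (q.pr l)
  pl_leaf : ∀ l, q.tm.isLeaf l → q.tp.isLeaf (q.pl l)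
  pl_pr : ∀ l, q.tp.isLeaf l → q.pl (q.pr l) = l
  pr_pl : ∀ l, q.tm.isLeaf l → q.pr (q.pl l) = l
  sign_pr : ∀ l, q.tp.isLeaf l → sign (false, q.pr l) = - sign (true, l)
  pr_norm : ∀ l, ¬ q.tp.isLeaf l → q.pr l = []
  pl_norm : ∀ l, ¬ q.tm.isLeaf l → q.pl l = []

/-- The set `A_p` attached to the leaf pair `p = {(true, l), (false, q.pr l)}`
(indexed by the leaf `l` of the positive tree): the set of all nodes `m` of `q` with
`m ⪰ (true, l)` or `m ⪰ (false, q.pr l)`, i.e. all weak ancestors of the two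
paired leaves. -/
def pairSet (q : Couple) (l : List (Fin 3)) : Set CNode :=
  {x | (x.1 = true ∧ x.2 <+: l) ∨ (x.1 = false ∧ x.2 <+: q.pr l)}

/-- Two nodes `x, y` of `q` are conjugate, `x ∼ y`, if for every leaf pair `p ∈ ℘`
either both belong to `A_p` or neither does. -/
def Conj (q : Couple) (x y : CNode) : Prop :=
  ∀ l, q.tp.isLeaf l →
    ((x ∈ q.pairSet l ∧ y ∈ q.pairSet l) ∨ (x ∉ q.pairSet l ∧ y ∉ q.pairSet l))

/-- The leaf of the leaf pair indexed by the `tp`-leaf `l` carrying the sign `+1`. -/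
def posLeaf (q : Couple) (l : List (Fin 3)) : CNode :=
  if sign (true, l) = 1 then ((true, l) : CNode) else ((false, q.pr l) : CNode)

/-- The leaf of the leaf pair indexed by the `tp`-leaf `l` carrying the sign `-1`. -/
def negLeaf (q : Couple) (l : List (Fin 3)) : CNode :=
  if sign (true, l) = 1 then ((false, q.pr l) : CNode) else ((true, l) : CNode)

end Couple

/-- `x` is a weak ancestor of `y` (i.e. `x ⪰ y` fails ... this states `y ⪯ x` in the
subtree order: `y` lies in the subtree rooted at `x`), as nodes of a couple. -/
def anc (x y : CNode) : Prop := x.1 = y.1 ∧ x.2 <+: y.2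

/-- The indicator `1_{x ⪰ y}` (i.e. `x` is a weak ancestor of `y`), with values in `ℤ`. -/
def ind1 (x y : CNode) : ℤ := if anc x y then 1 else 0

/-! ## Decorations -/

section Deco

variable {G : Type*} [AddCommGroup G]

/-- `ζ` is a `𝒟`-decoration of the ternary tree `t` (whose root carries sign `σ`),
valued in the additive abelian group `G`:  `ι_b ζ_b = ∑_{n : parent n = b} ι_n ζ_n`
for every branching node `b`. -/
def IsDDecoT (t : TTree) (σ : ℤ) (ζ : List (Fin 3) → G) : Prop :=
  ∀ p, t.isBranch p →
    nodeSign σ p • ζ p = ∑ j : Fin 3, nodeSign σ (p ++ [j]) • ζ (p ++ [j])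

/-- `η` is a `𝒞`-decoration of the ternary tree `t` valued in `G`:
`η_b = ∑_{n : parent n = b} η_n` for every branching node `b`. -/
def IsCDecoT (t : TTree) (η : List (Fin 3) → G) : Prop :=
  ∀ p, t.isBranch p → η p = ∑ j : Fin 3, η (p ++ [j])

/-- `ζ ∈ 𝒟^q(G)`: a map on the nodes of the couple `q` restricting to `𝒟`-decorations of
both trees and taking equal values on the two leaves of every leaf pair. -/
def IsDDeco (q : Couple) (ζ : CNode → G) : Prop :=
  IsDDecoT q.tp 1 (fun p => ζ (true, p)) ∧
  IsDDecoT q.tm (-1) (fun p => ζ (false, p)) ∧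
  ∀ l, q.tp.isLeaf l → ζ (true, l) = ζ (false, q.pr l)

/-- `η ∈ 𝒞^q(G)`: a map on the nodes of the couple `q` restricting to `𝒞`-decorations of
both trees and taking equal values on the two leaves of every leaf pair. -/
def IsCDeco (q : Couple) (η : CNode → G) : Prop :=
  IsCDecoT q.tp (fun p => η (true, p)) ∧
  IsCDecoT q.tm (fun p => η (false, p)) ∧
  ∀ l, q.tp.isLeaf l → η (true, l) = η (false, q.pr l)

/-- `ξ ∈ 𝒟^{τ*}(G)`: a map on the nodes of `q` restricting to a `𝒟`-decoration of each of
the two trees (with no constraint at leaf pairs). -/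
def IsDDecoPair (q : Couple) (ξ : CNode → G) : Prop :=
  IsDDecoT q.tp 1 (fun p => ξ (true, p)) ∧
  IsDDecoT q.tm (-1) (fun p => ξ (false, p))

end Deco

/-!
Every value of a 𝒞-decoration `η` is determined by its values on the leaf pairs:
`η_m = ∑_{p : m ∈ A_p} η_p`, and conversely the indicator of each `A_p` is a 𝒞-decoration.
This gives (i) ⇔ (iii).  Multiplication by the path sign
`nodeSign 1 = (-1)^(number of middle steps)`, which agrees with `ι` on `τ⁺` and with `-ι`
on `τ⁻`, maps `𝒟^q(G)` bijectively onto `𝒞^q(G)`.  The path sign is itself a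
𝒞-decoration, so conjugate nodes have equal path signs, which gives (iii) ⇒ (ii); applying
(ii) to the path sign times the indicator of `A_p` gives (ii) ⇒ (i).
-/

namespace TTree

lemma sub_append (t : TTree) (p r : List (Fin 3)) :
    t.sub (p ++ r) = (t.sub p).bind (·.sub r) := by
  induction p generalizing t with
  | nil => simp [sub]
  | cons i p ih =>
    cases t with
    | leaf => simp [sub]
    | node a b c => simp only [List.cons_append, sub, ih]

lemma isBranch.ne_of_isLeaf {t : TTree} {p l : List (Fin 3)} (hp : t.isBranch p)
    (hl : t.isLeaf l) : p ≠ l := by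
  rintro rfl
  obtain ⟨a, b, c, h⟩ := hp
  rw [hl] at h
  simp at h

lemma isLeaf.eq_of_prefix {t : TTree} {l l' : List (Fin 3)} (h : t.isLeaf l)
    (h' : t.isLeaf l') (hp : l <+: l') : l = l' := by
  obtain ⟨r, rfl⟩ := hp
  rw [isLeaf, sub_append, h] at h'
  cases r with
  | nil => simp
  | cons i r => simp [sub] at h'

lemma isLeaf.prefix_iff {t : TTree} {l l' : List (Fin 3)} (h : t.isLeaf l)
    (h' : t.isLeaf l') : l <+: l' ↔ l = l' :=
  ⟨h.eq_of_prefix h', fun e => e ▸ List.prefix_refl l⟩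

def leaves : TTree → Finset (List (Fin 3))
  | leaf => {[]}
  | node a b c => a.leaves.image (List.cons 0) ∪ b.leaves.image (List.cons 1) ∪
      c.leaves.image (List.cons 2)

@[simp]
lemma mem_leaves {t : TTree} {l : List (Fin 3)} : l ∈ t.leaves ↔ t.isLeaf l := by
  induction t generalizing l with
  | leaf => cases l <;> simp [leaves, isLeaf, sub]
  | node a b c iha ihb ihc =>
    cases l with
    | nil => simp [leaves, isLeaf, sub]
    | cons i l =>
      fin_cases i <;> simp [leaves, isLeaf, sub, iha, ihb, ihc]

end TTree

-- A path strictly extending `p` extends exactly one of the children `p ++ [j]`.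
lemma sum_ite_append_singleton_prefix {G : Type*} [AddCommMonoid G] {p l : List (Fin 3)}
    (h : p ≠ l) (a : G) :
    ∑ j : Fin 3, (if p ++ [j] <+: l then a else 0) = if p <+: l then a else 0 := by
  by_cases hp : p <+: l
  · obtain ⟨_ | ⟨j₀, r⟩, rfl⟩ := hp
    · simp at h
    · simp [List.prefix_append_right_inj, List.cons_prefix_cons]
  · rw [if_neg hp]
    refine Finset.sum_eq_zero fun j _ => if_neg fun hj => hp ?_
    exact (p.prefix_append [j]).trans hj

lemma iff_of_ite_one_zero_eq_ite_one_zero {a b : Prop} [Decidable a] [Decidable b]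
    (h : (if a then (1 : ℤ) else 0) = if b then 1 else 0) : a ↔ b := by
  split_ifs at h <;> simp_all

section Decorations

variable {G : Type*} [AddCommGroup G]

lemma IsCDecoT.eq_sum_leaves {t : TTree} {g : List (Fin 3) → G} (hg : IsCDecoT t g)
    {p : List (Fin 3)} (hp : t.valid p) :
    g p = ∑ l ∈ t.leaves, if p <+: l then g l else 0 := by
  obtain ⟨s, hs⟩ := Option.isSome_iff_exists.1 hp
  clear hp
  induction s generalizing p with
  | leaf =>
    have hl : t.isLeaf p := hs
    rw [Finset.sum_eq_single_of_mem p (TTree.mem_leaves.2 hl) fun l hl' hne =>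
      if_neg fun hpl => hne (hl.eq_of_prefix (TTree.mem_leaves.1 hl') hpl).symm]
    simp
  | node a b c iha ihb ihc =>
    have hb : t.isBranch p := ⟨a, b, c, hs⟩
    have hchild : ∀ j : Fin 3,
        g (p ++ [j]) = ∑ l ∈ t.leaves, if p ++ [j] <+: l then g l else 0 := by
      intro j
      fin_cases j
      · exact iha (by simp [TTree.sub_append, hs, TTree.sub])
      · exact ihb (by simp [TTree.sub_append, hs, TTree.sub])
      · exact ihc (by simp [TTree.sub_append, hs, TTree.sub])
    rw [hg p hb, Finset.sum_congr rfl fun j _ => hchild j, Finset.sum_comm]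
    exact Finset.sum_congr rfl fun l hl =>
      sum_ite_append_singleton_prefix (hb.ne_of_isLeaf (TTree.mem_leaves.1 hl)) _

lemma nodeSign_neg (σ : ℤ) (p : List (Fin 3)) : nodeSign (-σ) p = -nodeSign σ p := by
  simp [nodeSign]

lemma nodeSign_one_mul_self (p : List (Fin 3)) : nodeSign 1 p * nodeSign 1 p = 1 := by
  rw [nodeSign, one_mul, ← pow_add]
  exact Even.neg_one_pow ⟨_, rfl⟩

lemma isUnit_nodeSign_one (p : List (Fin 3)) : IsUnit (nodeSign 1 p) :=
  IsUnit.of_mul_eq_one _ (nodeSign_one_mul_self p)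

lemma sum_nodeSign_append_singleton (σ : ℤ) (p : List (Fin 3)) :
    ∑ j : Fin 3, nodeSign σ (p ++ [j]) = nodeSign σ p := by
  simp only [nodeSign, Fin.sum_univ_three, List.count_append]
  simp [pow_succ]

lemma isDDecoT_neg_iff {t : TTree} {σ : ℤ} {ζ : List (Fin 3) → G} :
    IsDDecoT t (-σ) ζ ↔ IsDDecoT t σ ζ := by
  simp only [IsDDecoT, nodeSign_neg, neg_smul, Finset.sum_neg_distrib, neg_inj]

end Decorations

namespace Couple

variable {q : Couple}

@[simp]
lemma mem_pairSet_true {p l : List (Fin 3)} : (true, p) ∈ q.pairSet l ↔ p <+: l := by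
  simp [pairSet]

@[simp]
lemma mem_pairSet_false {p l : List (Fin 3)} : (false, p) ∈ q.pairSet l ↔ p <+: q.pr l := by
  simp [pairSet]

lemma IsCouple.pr_prefix_pr_iff (hq : q.IsCouple) {l l' : List (Fin 3)} (hl : q.tp.isLeaf l)
    (hl' : q.tp.isLeaf l') : q.pr l <+: q.pr l' ↔ l = l' := by
  rw [(hq.pr_leaf l hl).prefix_iff (hq.pr_leaf l' hl')]
  exact ⟨fun h => by rw [← hq.pl_pr l hl, h, hq.pl_pr l' hl'], congrArg q.pr⟩

lemma IsCouple.nodeSign_pr (hq : q.IsCouple) {l : List (Fin 3)} (hl : q.tp.isLeaf l) :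
    nodeSign 1 (q.pr l) = nodeSign 1 l := by
  simpa [sign, nodeSign_neg] using hq.sign_pr l hl

lemma IsCouple.sum_leaves_tm (hq : q.IsCouple) {M : Type*} [AddCommMonoid M]
    (f : List (Fin 3) → M) : ∑ L ∈ q.tm.leaves, f L = ∑ l ∈ q.tp.leaves, f (q.pr l) :=
  Finset.sum_nbij' q.pl q.pr
    (fun L hL => TTree.mem_leaves.2 (hq.pl_leaf L (TTree.mem_leaves.1 hL)))
    (fun l hl => TTree.mem_leaves.2 (hq.pr_leaf l (TTree.mem_leaves.1 hl)))
    (fun L hL => hq.pr_pl L (TTree.mem_leaves.1 hL))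
    (fun l hl => hq.pl_pr l (TTree.mem_leaves.1 hl))
    (fun L hL => by rw [hq.pr_pl L (TTree.mem_leaves.1 hL)])

lemma conj_iff_forall_mem_pairSet_iff {x y : CNode} :
    q.Conj x y ↔ ∀ l, q.tp.isLeaf l → (x ∈ q.pairSet l ↔ y ∈ q.pairSet l) := by
  simp only [Conj, iff_iff_and_or_not_and_not]

end Couple

section CoupleDecorations

variable {q : Couple} {G : Type*} [AddCommGroup G]

open Couple

lemma IsCDeco.eq_sum_pairSet (hq : q.IsCouple) {η : CNode → G} (hη : IsCDeco q η)
    {x : CNode} (hx : q.isNode x) :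
    η x = ∑ l ∈ q.tp.leaves, if x ∈ q.pairSet l then η (true, l) else 0 := by
  obtain ⟨_ | _, p⟩ := x
  · rw [hη.2.1.eq_sum_leaves hx, hq.sum_leaves_tm]
    refine Finset.sum_congr rfl fun l hl => ?_
    simp only [mem_pairSet_false, hη.2.2 l (TTree.mem_leaves.1 hl)]
  · simpa using hη.1.eq_sum_leaves hx

lemma isCDeco_indicator_pairSet (hq : q.IsCouple) {l₀ : List (Fin 3)} (hl₀ : q.tp.isLeaf l₀) :
    IsCDeco q fun x => if x ∈ q.pairSet l₀ then (1 : ℤ) else 0 := by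
  refine ⟨fun p hp => ?_, fun p hp => ?_, fun l hl => ?_⟩
  · simpa using (sum_ite_append_singleton_prefix (hp.ne_of_isLeaf hl₀) (1 : ℤ)).symm
  · simpa using (sum_ite_append_singleton_prefix
      (hp.ne_of_isLeaf (hq.pr_leaf l₀ hl₀)) (1 : ℤ)).symm
  · simp [hl.prefix_iff hl₀, hq.pr_prefix_pr_iff hl hl₀]

lemma isCDeco_nodeSign (hq : q.IsCouple) : IsCDeco q fun x => nodeSign 1 x.2 :=
  ⟨fun p _ => (sum_nodeSign_append_singleton 1 p).symm,
    fun p _ => (sum_nodeSign_append_singleton 1 p).symm,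
    fun _ hl => (hq.nodeSign_pr hl).symm⟩

lemma isDDeco_iff_isCDeco_nodeSign_smul (hq : q.IsCouple) {ζ : CNode → G} :
    IsDDeco q ζ ↔ IsCDeco q fun x => nodeSign 1 x.2 • ζ x := by
  have hleaf : ∀ l, q.tp.isLeaf l → (ζ (true, l) = ζ (false, q.pr l) ↔
      nodeSign 1 l • ζ (true, l) = nodeSign 1 (q.pr l) • ζ (false, q.pr l)) := fun l hl => by
    rw [hq.nodeSign_pr hl, (isUnit_nodeSign_one l).smul_left_cancel]
  refine and_congr Iff.rfl (and_congr ?_ (forall₂_congr hleaf))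
  rw [← neg_neg (1 : ℤ), isDDecoT_neg_iff]
  exact Iff.rfl

lemma Couple.conj_iff_forall_isCDeco (hq : q.IsCouple) {x y : CNode} (hx : q.isNode x)
    (hy : q.isNode y) : q.Conj x y ↔
      ∀ (G : Type) [AddCommGroup G], ∀ η : CNode → G, IsCDeco q η → η x = η y := by
  rw [conj_iff_forall_mem_pairSet_iff]
  refine ⟨fun h G _ η hη => ?_, fun h l hl => ?_⟩
  · rw [hη.eq_sum_pairSet hq hx, hη.eq_sum_pairSet hq hy]
    exact Finset.sum_congr rfl fun l hl => if_congr (h l (TTree.mem_leaves.1 hl)) rfl rfl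
  · exact iff_of_ite_one_zero_eq_ite_one_zero (h ℤ _ (isCDeco_indicator_pairSet hq hl))

lemma forall_isDDeco_of_forall_isCDeco (hq : q.IsCouple) {x y : CNode}
    (h : ∀ (G : Type) [AddCommGroup G], ∀ η : CNode → G, IsCDeco q η → η x = η y)
    (G : Type) [AddCommGroup G] (ζ : CNode → G) (hζ : IsDDeco q ζ) : ζ x = ζ y := by
  have hsign : nodeSign 1 x.2 = nodeSign 1 y.2 := h ℤ _ (isCDeco_nodeSign hq)
  have hsmul := h G _ ((isDDeco_iff_isCDeco_nodeSign_smul hq).1 hζ)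
  rwa [hsign, (isUnit_nodeSign_one y.2).smul_left_cancel] at hsmul

lemma Couple.conj_of_forall_isDDeco (hq : q.IsCouple) {x y : CNode}
    (h : ∀ (G : Type) [AddCommGroup G], ∀ ζ : CNode → G, IsDDeco q ζ → ζ x = ζ y) :
    q.Conj x y := by
  rw [conj_iff_forall_mem_pairSet_iff]
  intro l hl
  let ζ : CNode → ℤ := fun z => nodeSign 1 z.2 * if z ∈ q.pairSet l then 1 else 0
  have hζ : IsDDeco q ζ := by
    rw [isDDeco_iff_isCDeco_nodeSign_smul hq]
    simpa only [ζ, smul_eq_mul, ← mul_assoc, nodeSign_one_mul_self, one_mul]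
      using isCDeco_indicator_pairSet hq hl
  have hsq : ∀ z, ζ z ^ 2 = if z ∈ q.pairSet l then 1 else 0 := fun z => by
    rw [mul_pow, sq (nodeSign 1 z.2), nodeSign_one_mul_self, one_mul]
    split_ifs <;> norm_num
  exact iff_of_ite_one_zero_eq_ite_one_zero (by rw [← hsq, ← hsq, h ℤ ζ hζ])

end CoupleDecorations

/-- Two nodes of a couple are conjugate iff every `𝒟`-decoration
(valued in any additive abelian group) takes equal values at them, iff every
`𝒞`-decoration takes equal values at them. -/
theorem statement3 (q : Couple) (hq : q.IsCouple) (x y : CNode)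
    (hx : q.isNode x) (hy : q.isNode y) :
    (q.Conj x y ↔
      ∀ (G : Type) [AddCommGroup G], ∀ ζ : CNode → G, IsDDeco q ζ → ζ x = ζ y) ∧
    (q.Conj x y ↔
      ∀ (G : Type) [AddCommGroup G], ∀ η : CNode → G, IsCDeco q η → η x = η y) := by
  have hC := Couple.conj_iff_forall_isCDeco hq hx hy
  exact ⟨⟨fun h => forall_isDDeco_of_forall_isCDeco hq (hC.1 h),
    Couple.conj_of_forall_isDDeco hq⟩, hC⟩

end WickNLS

end
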